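/- arXiv:2002.08483 — 5 statements merged into one kernel-verified Lean document; each statement's English description precedes it below -/
import Mathlib

section
/- Suppose the weak loss ℓ^weak is symmetric and satisfies the triangle inequality. Let g* ∈ G be a minimizer over G of g ↦ E_P[ℓ^weak(β_gᵀ g(X), W)], let f* : X×Z → Y be L-Lipschitz relative to G, and let ĝ ∈ G and f̂ : X×Z → Y be arbitrary. Then the excess risk satisfies E_P[ℓ(f̂(X, ĝ(X)), Y) − ℓ(f*(X, g*(X)), Y)] ≤ 2L·E_P[ℓ^weak(β_ĝᵀ ĝ(X), W)] + E_P[ℓ(f̂(X, ĝ(X)), Y) − ℓ(f*(X, ĝ(X)), Y)]. -/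
open MeasureTheory

/-!
Write `Δ(g, g') = ℓ(f*(X, g(X)), Y) − ℓ(f*(X, g'(X)), Y)`. The excess risk of `(f̂, ĝ)` is
`E[Δ(ĝ, g*)]` plus the last term of the bound. Relative Lipschitzness bounds `Δ(ĝ, g*)` by
`L·ℓʷ(β_ĝᵀ ĝ(X), β_{g*}ᵀ g*(X))`; routing the weak loss through the observed weak label `W` by
symmetry and the triangle inequality bounds this by `L` times the sum of the pointwise weak losses
of `ĝ` and `g*`, and since `g*` minimizes the weak risk, `E[Δ(ĝ, g*)]` is at most `2L` times the
weak risk of `ĝ`.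
-/

section WeakLoss

variable {Ω 𝓦 : Type*} {d : 𝓦 → 𝓦 → ℝ}

lemma le_add_of_symm_of_triangle (hsymm : ∀ a b, d a b = d b a)
    (htri : ∀ a b c, d a c ≤ d a b + d b c) (a b w : 𝓦) :
    d a b ≤ d a w + d b w :=
  hsymm b w ▸ htri a w b

variable [MeasurableSpace Ω] {μ : Measure Ω}

lemma integral_sub_le_two_mul_integral_of_le_mul_of_integral_le
    (hsymm : ∀ a b, d a b = d b a) (htri : ∀ a b c, d a c ≤ d a b + d b c)
    {F F' : Ω → ℝ} {p p' w : Ω → 𝓦} {L : ℝ} (hL : 0 ≤ L)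
    (hlip : ∀ u, F u - F' u ≤ L * d (p u) (p' u))
    (hF : Integrable F μ) (hF' : Integrable F' μ)
    (hp : Integrable (fun u => d (p u) (w u)) μ) (hp' : Integrable (fun u => d (p' u) (w u)) μ)
    (hmin : ∫ u, d (p' u) (w u) ∂μ ≤ ∫ u, d (p u) (w u) ∂μ) :
    ∫ u, (F u - F' u) ∂μ ≤ 2 * L * ∫ u, d (p u) (w u) ∂μ := by
  have hpointwise : ∀ u, F u - F' u ≤ L * d (p u) (w u) + L * d (p' u) (w u) := fun u =>
    calc F u - F' u ≤ L * d (p u) (p' u) := hlip u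
      _ ≤ L * (d (p u) (w u) + d (p' u) (w u)) :=
        mul_le_mul_of_nonneg_left (le_add_of_symm_of_triangle hsymm htri _ _ _) hL
      _ = _ := mul_add _ _ _
  calc ∫ u, (F u - F' u) ∂μ
      ≤ ∫ u, (L * d (p u) (w u) + L * d (p' u) (w u)) ∂μ :=
        integral_mono (hF.sub hF') ((hp.const_mul L).add (hp'.const_mul L)) hpointwise
    _ = L * ∫ u, d (p u) (w u) ∂μ + L * ∫ u, d (p' u) (w u) ∂μ := by
        rw [integral_add (hp.const_mul L) (hp'.const_mul L), integral_const_mul,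
          integral_const_mul]
    _ ≤ 2 * L * ∫ u, d (p u) (w u) ∂μ := by linarith [mul_le_mul_of_nonneg_left hmin hL]

end WeakLoss

/-- `P` is the joint law of `(X, W, Y)` and `wp g : 𝓧 → 𝓦` is the weak predictor
`x ↦ β_gᵀ g(x)`. -/
theorem excess_risk_decomposition_general
    {𝓧 𝓦 𝓨 𝓩 : Type*} [MeasurableSpace 𝓧] [MeasurableSpace 𝓦] [MeasurableSpace 𝓨]
    (P : Measure (𝓧 × 𝓦 × 𝓨))
    (ℓ : 𝓨 → 𝓨 → ℝ) (ℓw : 𝓦 → 𝓦 → ℝ)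
    (hℓw_symm : ∀ w w', ℓw w w' = ℓw w' w)
    (hℓw_tri : ∀ w₁ w₂ w₃, ℓw w₁ w₃ ≤ ℓw w₁ w₂ + ℓw w₂ w₃)
    (G : Set (𝓧 → 𝓩)) (wp : (𝓧 → 𝓩) → 𝓧 → 𝓦)
    (L : ℝ) (hL : 0 ≤ L)
    (gstar : 𝓧 → 𝓩) (hgstar : gstar ∈ G)
    (hgstar_min : ∀ g ∈ G,
      ∫ u, ℓw (wp gstar u.1) u.2.1 ∂P ≤ ∫ u, ℓw (wp g u.1) u.2.1 ∂P)
    (fstar : 𝓧 → 𝓩 → 𝓨)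
    (hfstar_lip : ∀ x y, ∀ g ∈ G, ∀ g' ∈ G,
      |ℓ (fstar x (g x)) y - ℓ (fstar x (g' x)) y| ≤ L * ℓw (wp g x) (wp g' x))
    (ghat : 𝓧 → 𝓩) (hghat : ghat ∈ G) (fhat : 𝓧 → 𝓩 → 𝓨)
    (hI1 : Integrable (fun u => ℓ (fhat u.1 (ghat u.1)) u.2.2) P)
    (hI2 : Integrable (fun u => ℓ (fstar u.1 (ghat u.1)) u.2.2) P)
    (hI4 : Integrable (fun u => ℓ (fstar u.1 (gstar u.1)) u.2.2) P)
    (hIw : Integrable (fun u => ℓw (wp ghat u.1) u.2.1) P)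
    (hIwstar : Integrable (fun u => ℓw (wp gstar u.1) u.2.1) P) :
    ∫ u, (ℓ (fhat u.1 (ghat u.1)) u.2.2 - ℓ (fstar u.1 (gstar u.1)) u.2.2) ∂P ≤
      2 * L * ∫ u, ℓw (wp ghat u.1) u.2.1 ∂P +
        ∫ u, (ℓ (fhat u.1 (ghat u.1)) u.2.2 - ℓ (fstar u.1 (ghat u.1)) u.2.2) ∂P := by
  have hestimation :
      ∫ u, (ℓ (fstar u.1 (ghat u.1)) u.2.2 - ℓ (fstar u.1 (gstar u.1)) u.2.2) ∂P ≤
        2 * L * ∫ u, ℓw (wp ghat u.1) u.2.1 ∂P :=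
    integral_sub_le_two_mul_integral_of_le_mul_of_integral_le hℓw_symm hℓw_tri hL
      (fun u => (le_abs_self _).trans (hfstar_lip u.1 u.2.2 ghat hghat gstar hgstar))
      hI2 hI4 hIw hIwstar (hgstar_min ghat hghat)
  rw [integral_sub hI2 hI4] at hestimation
  rw [integral_sub hI1 hI4, integral_sub hI1 hI2]
  linarith

/-- Excess risk decomposition (Proposition 1 of the paper): if `f*` is `L`-Lipschitz relative
to `G`, the weak loss is a symmetric function satisfying the triangle inequality,
`β_{g₀}ᵀ g₀(X) = W` a.s. and `g*` minimizes the weak risk over `G`, then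
`E[ℓ(f̂(X, ĝ(X)), Y) − ℓ(f*(X, g*(X)), Y)]
  ≤ 2L·E[ℓʷ(β_ĝᵀ ĝ(X), W)] + E[ℓ(f̂(X, ĝ(X)), Y) − ℓ(f*(X, ĝ(X)), Y)]`.
Here `wp g : 𝓧 → 𝓦` denotes the weak predictor `x ↦ β_gᵀ g(x)` associated with `g ∈ G`. -/
theorem excess_risk_decomposition
    {𝓧 𝓦 𝓨 𝓩 : Type*} [MeasurableSpace 𝓧] [MeasurableSpace 𝓦] [MeasurableSpace 𝓨]
    (P : Measure (𝓧 × 𝓦 × 𝓨)) [IsProbabilityMeasure P]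
    (ℓ : 𝓨 → 𝓨 → ℝ) (ℓw : 𝓦 → 𝓦 → ℝ)
    (hℓ_nonneg : ∀ y y', 0 ≤ ℓ y y')
    (hℓw_nonneg : ∀ w w', 0 ≤ ℓw w w')
    (hℓw_symm : ∀ w w', ℓw w w' = ℓw w' w)
    (hℓw_tri : ∀ w₁ w₂ w₃, ℓw w₁ w₃ ≤ ℓw w₁ w₂ + ℓw w₂ w₃)
    (G : Set (𝓧 → 𝓩)) (wp : (𝓧 → 𝓩) → 𝓧 → 𝓦)
    (g₀ : 𝓧 → 𝓩) (hg₀ : g₀ ∈ G)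
    (hg₀W : ∀ᵐ u ∂P, wp g₀ u.1 = u.2.1)
    (L : ℝ) (hL : 0 ≤ L)
    (gstar : 𝓧 → 𝓩) (hgstar : gstar ∈ G)
    (hgstar_min : ∀ g ∈ G,
      ∫ u, ℓw (wp gstar u.1) u.2.1 ∂P ≤ ∫ u, ℓw (wp g u.1) u.2.1 ∂P)
    (fstar : 𝓧 → 𝓩 → 𝓨)
    (hfstar_lip : ∀ x y, ∀ g ∈ G, ∀ g' ∈ G,
      |ℓ (fstar x (g x)) y - ℓ (fstar x (g' x)) y| ≤ L * ℓw (wp g x) (wp g' x))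
    (ghat : 𝓧 → 𝓩) (hghat : ghat ∈ G) (fhat : 𝓧 → 𝓩 → 𝓨)
    (hI1 : Integrable (fun u => ℓ (fhat u.1 (ghat u.1)) u.2.2) P)
    (hI2 : Integrable (fun u => ℓ (fstar u.1 (ghat u.1)) u.2.2) P)
    (hI3 : Integrable (fun u => ℓ (fstar u.1 (g₀ u.1)) u.2.2) P)
    (hI4 : Integrable (fun u => ℓ (fstar u.1 (gstar u.1)) u.2.2) P)
    (hIw : Integrable (fun u => ℓw (wp ghat u.1) u.2.1) P)
    (hIwstar : Integrable (fun u => ℓw (wp gstar u.1) u.2.1) P) :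
    ∫ u, (ℓ (fhat u.1 (ghat u.1)) u.2.2 - ℓ (fstar u.1 (gstar u.1)) u.2.2) ∂P ≤
      2 * L * ∫ u, ℓw (wp ghat u.1) u.2.1 ∂P +
        ∫ u, (ℓ (fhat u.1 (ghat u.1)) u.2.2 - ℓ (fstar u.1 (ghat u.1)) u.2.2) ∂P :=
  excess_risk_decomposition_general P ℓ ℓw hℓw_symm hℓw_tri G wp L hL gstar hgstar hgstar_min fstar
    hfstar_lip ghat hghat fhat hI1 hI2 hI4 hIw hIwstar
end

section
/- Suppose ℓ^weak(w,w') = 1{w ≠ w'}, the loss ℓ takes values in [0,B] for some B > 0, every f ∈ F is L-Lipschitz relative to G for some L > 0, and (ℓ, P_{g₀}, F) satisfies the ε-weak η-central condition with witness f* ∈ F. Then for every ĝ ∈ G and every f ∈ F, (1/η)·log E_P[exp(−η(ℓ(f(X, ĝ(X)), Y) − ℓ(f*(X, ĝ(X)), Y)))] ≤ ε + (e^{ηB}/η)·P(β_ĝᵀ ĝ(X) ≠ W); in particular, (ℓ, P̂, F) satisfies the (ε + (e^{ηB}/η)·P(β_ĝᵀ ĝ(X) ≠ W))-weak η-central condition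 with the same witness f*. -/
open MeasureTheory

/-! Where the weak predictions `wp ĝ X` and `wp g₀ X = W` agree, the relative Lipschitz
property with the `0/1` weak loss forces `ĝ` and `g₀` to give the same losses, so the two
exponential integrands coincide. On the disagreement event the `ĝ`-integrand is at most
`e^{ηB}` and the `g₀`-integrand is positive, so `E[ĝ-integrand] ≤ e^{ηε} + e^{ηB} P(ĝ ≠ W)`,
and `log (e^a + b) ≤ a + b` for `a, b ≥ 0`. -/

theorem Real.log_le_add_of_le_exp_add {x a b : ℝ} (hx : 0 < x) (ha : 0 ≤ a) (hb : 0 ≤ b)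
    (h : x ≤ Real.exp a + b) : Real.log x ≤ a + b := by
  rw [Real.log_le_iff_le_exp hx, Real.exp_add]
  calc x ≤ Real.exp a + b := h
    _ ≤ Real.exp a + Real.exp a * b := by nlinarith [Real.one_le_exp ha]
    _ = Real.exp a * (b + 1) := by ring
    _ ≤ Real.exp a * Real.exp b := by gcongr; exact Real.add_one_le_exp b

theorem Real.exp_neg_mul_sub_le_exp_mul {η a b B : ℝ} (hη : 0 ≤ η) (ha : 0 ≤ a) (hb : b ≤ B) :
    Real.exp (-η * (a - b)) ≤ Real.exp (η * B) :=
  Real.exp_le_exp.mpr (by nlinarith)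

namespace MeasureTheory

theorem integral_le_integral_add_mul_measureReal {α : Type*} [MeasurableSpace α]
    {μ : Measure α} [IsFiniteMeasure μ] {f g : α → ℝ} {s : Set α} {c : ℝ}
    (hf : Integrable f μ) (hg : Integrable g μ) (hc : 0 ≤ c)
    (hfg : ∀ᵐ x ∂μ, f x ≤ g x + s.indicator (fun _ => c) x) :
    ∫ x, f x ∂μ ≤ ∫ x, g x ∂μ + c * μ.real s := by
  set t := toMeasurable μ s
  have ht : MeasurableSet t := measurableSet_toMeasurable μ s
  have hfgt : ∀ᵐ x ∂μ, f x ≤ g x + t.indicator (fun _ => c) x := by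
    filter_upwards [hfg] with x hx
    exact hx.trans (add_le_add_right
      (Set.indicator_le_indicator_of_subset (subset_toMeasurable μ s) (fun _ => hc) x) _)
  calc ∫ x, f x ∂μ ≤ ∫ x, g x + t.indicator (fun _ => c) x ∂μ :=
        integral_mono_ae hf (hg.add ((integrable_const c).indicator ht)) hfgt
    _ = ∫ x, g x ∂μ + c * μ.real s := by
        rw [integral_add hg ((integrable_const c).indicator ht), integral_indicator_const c ht,
          measureReal_def, measureReal_def, measure_toMeasurable, smul_eq_mul, mul_comm]

end MeasureTheory

theorem weak_central_condition_transfer_categorical_general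
    {𝓧 𝓦 𝓨 𝓩 : Type*} [MeasurableSpace 𝓧] [MeasurableSpace 𝓦] [MeasurableSpace 𝓨]
    [DecidableEq 𝓦]
    (P : Measure (𝓧 × 𝓦 × 𝓨)) [IsProbabilityMeasure P]
    (ℓ : 𝓨 → 𝓨 → ℝ) (B : ℝ)
    (hℓ : ∀ y y', ℓ y y' ∈ Set.Icc 0 B)
    (ℓw : 𝓦 → 𝓦 → ℝ)
    (hℓw : ∀ w w', ℓw w w' = if w = w' then 0 else 1)
    (G : Set (𝓧 → 𝓩)) (wp : (𝓧 → 𝓩) → 𝓧 → 𝓦)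
    (g₀ : 𝓧 → 𝓩) (hg₀ : g₀ ∈ G)
    (hg₀W : ∀ᵐ u ∂P, wp g₀ u.1 = u.2.1)
    (F : Set (𝓧 → 𝓩 → 𝓨)) (L : ℝ)
    (hLip : ∀ f ∈ F, ∀ x y, ∀ g ∈ G, ∀ g' ∈ G,
      |ℓ (f x (g x)) y - ℓ (f x (g' x)) y| ≤ L * ℓw (wp g x) (wp g' x))
    (η ε : ℝ) (hη : 0 < η) (hε : 0 ≤ ε)
    (fstar : 𝓧 → 𝓩 → 𝓨) (hfstar : fstar ∈ F)
    (hInt : ∀ f ∈ F, ∀ g ∈ G, Integrable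
      (fun u => Real.exp (-η * (ℓ (f u.1 (g u.1)) u.2.2 - ℓ (fstar u.1 (g u.1)) u.2.2))) P)
    (hcentral : ∀ f ∈ F,
      ∫ u, Real.exp (-η * (ℓ (f u.1 (g₀ u.1)) u.2.2 - ℓ (fstar u.1 (g₀ u.1)) u.2.2)) ∂P
        ≤ Real.exp (η * ε)) :
    ∀ ghat ∈ G, ∀ f ∈ F,
      (1 / η) * Real.log (∫ u,
          Real.exp (-η * (ℓ (f u.1 (ghat u.1)) u.2.2 - ℓ (fstar u.1 (ghat u.1)) u.2.2)) ∂P)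
        ≤ ε + (Real.exp (η * B) / η) * (P {u | wp ghat u.1 ≠ u.2.1}).toReal := by
  intro ghat hghat f hf
  set E := {u : 𝓧 × 𝓦 × 𝓨 | wp ghat u.1 ≠ u.2.1}
  have hloss_eq : ∀ f' ∈ F, ∀ x y, wp ghat x = wp g₀ x →
      ℓ (f' x (ghat x)) y = ℓ (f' x (g₀ x)) y := fun f' hf' x y hx => by
    have h := hLip f' hf' x y ghat hghat g₀ hg₀
    rw [hℓw, if_pos hx, mul_zero] at h
    exact sub_eq_zero.mp (abs_nonpos_iff.mp h)
  have hbound : ∀ᵐ u ∂P,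
      Real.exp (-η * (ℓ (f u.1 (ghat u.1)) u.2.2 - ℓ (fstar u.1 (ghat u.1)) u.2.2))
        ≤ Real.exp (-η * (ℓ (f u.1 (g₀ u.1)) u.2.2 - ℓ (fstar u.1 (g₀ u.1)) u.2.2))
          + E.indicator (fun _ => Real.exp (η * B)) u := by
    filter_upwards [hg₀W] with u hu
    by_cases hagree : wp ghat u.1 = u.2.1
    · rw [Set.indicator_of_notMem (not_not.mpr hagree), add_zero,
        hloss_eq f hf _ _ (hagree.trans hu.symm), hloss_eq fstar hfstar _ _ (hagree.trans hu.symm)]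
    · rw [Set.indicator_of_mem hagree]
      have hle := Real.exp_neg_mul_sub_le_exp_mul hη.le
        (hℓ (f u.1 (ghat u.1)) u.2.2).1 (hℓ (fstar u.1 (ghat u.1)) u.2.2).2
      linarith [Real.exp_pos (-η * (ℓ (f u.1 (g₀ u.1)) u.2.2 - ℓ (fstar u.1 (g₀ u.1)) u.2.2))]
  have hlog := Real.log_le_add_of_le_exp_add (a := η * ε) (b := Real.exp (η * B) * P.real E)
    (integral_exp_pos (hInt f hf ghat hghat))
    (by positivity) (by positivity)
    ((integral_le_integral_add_mul_measureReal (hInt f hf ghat hghat) (hInt f hf g₀ hg₀)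
      (Real.exp_pos _).le hbound).trans (by linarith [hcentral f hf]))
  calc _ ≤ (1 / η) * (η * ε + Real.exp (η * B) * P.real E) := by gcongr
    _ = _ := by rw [measureReal_def]; field_simp

/-- Transfer of the weak central condition, categorical weak labels (Proposition 2 of the
paper): if `ℓʷ(w,w') = 1{w ≠ w'}`, `ℓ` takes values in `[0,B]`, every `f ∈ F` is
`L`-Lipschitz relative to `G`, and `(ℓ, P_{g₀}, F)` satisfies the `ε`-weak `η`-central
condition with witness `f*`, then for every `ĝ ∈ G` and every `f ∈ F`,
`(1/η)·log E[exp(−η(ℓ_{f(·,ĝ)} − ℓ_{f*(·,ĝ)}))] ≤ ε + (e^{ηB}/η)·P(β_ĝᵀ ĝ(X) ≠ W)`;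
i.e. `(ℓ, P̂, F)` satisfies the corresponding weak `η`-central condition with witness `f*`.
Here `wp g : 𝓧 → 𝓦` denotes the weak predictor `x ↦ β_gᵀ g(x)` associated with `g ∈ G`. -/
theorem weak_central_condition_transfer_categorical
    {𝓧 𝓦 𝓨 𝓩 : Type*} [MeasurableSpace 𝓧] [MeasurableSpace 𝓦] [MeasurableSpace 𝓨]
    [DecidableEq 𝓦]
    (P : Measure (𝓧 × 𝓦 × 𝓨)) [IsProbabilityMeasure P]
    (ℓ : 𝓨 → 𝓨 → ℝ) (B : ℝ) (hB : 0 < B)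
    (hℓ : ∀ y y', ℓ y y' ∈ Set.Icc 0 B)
    (ℓw : 𝓦 → 𝓦 → ℝ)
    (hℓw : ∀ w w', ℓw w w' = if w = w' then 0 else 1)
    (G : Set (𝓧 → 𝓩)) (wp : (𝓧 → 𝓩) → 𝓧 → 𝓦)
    (g₀ : 𝓧 → 𝓩) (hg₀ : g₀ ∈ G)
    (hg₀W : ∀ᵐ u ∂P, wp g₀ u.1 = u.2.1)
    (F : Set (𝓧 → 𝓩 → 𝓨)) (L : ℝ) (hL : 0 < L)
    (hLip : ∀ f ∈ F, ∀ x y, ∀ g ∈ G, ∀ g' ∈ G,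
      |ℓ (f x (g x)) y - ℓ (f x (g' x)) y| ≤ L * ℓw (wp g x) (wp g' x))
    (η ε : ℝ) (hη : 0 < η) (hε : 0 ≤ ε)
    (fstar : 𝓧 → 𝓩 → 𝓨) (hfstar : fstar ∈ F)
    (hInt : ∀ f ∈ F, ∀ g ∈ G, Integrable
      (fun u => Real.exp (-η * (ℓ (f u.1 (g u.1)) u.2.2 - ℓ (fstar u.1 (g u.1)) u.2.2))) P)
    (hcentral : ∀ f ∈ F,
      ∫ u, Real.exp (-η * (ℓ (f u.1 (g₀ u.1)) u.2.2 - ℓ (fstar u.1 (g₀ u.1)) u.2.2)) ∂P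
        ≤ Real.exp (η * ε)) :
    ∀ ghat ∈ G, ∀ f ∈ F,
      (1 / η) * Real.log (∫ u,
          Real.exp (-η * (ℓ (f u.1 (ghat u.1)) u.2.2 - ℓ (fstar u.1 (ghat u.1)) u.2.2)) ∂P)
        ≤ ε + (Real.exp (η * B) / η) * (P {u | wp ghat u.1 ≠ u.2.1}).toReal :=
  weak_central_condition_transfer_categorical_general P ℓ B hℓ ℓw hℓw G wp g₀ hg₀ hg₀W F L hLip η ε
    hη hε fstar hfstar hInt hcentral
end

section
/- Suppose W is a normed space, ℓ^weak(w,w') = ‖w − w'‖, the loss ℓ takes values in [0,B] for some B > 0, every f ∈ F is L-Lipschitz relative to G, and (ℓ, P_{g₀}, F) satisfies the ε-weak η-central condition with witness f* ∈ F. Then for every ĝ ∈ G, every f ∈ F, and every δ > 0, (1/η)·log E_P[exp(−η(ℓ(f(X, ĝ(X)), Y) − ℓ(f*(X, ĝ(X)), Y)))] ≤ ε + 2δ + (L·e^{ηB}/(δη))·E_P[‖β_ĝᵀ ĝ(X) − W‖]. -/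
open MeasureTheory

/-!
Where `L‖β_ĝᵀĝ(X) − W‖ ≤ δ`, relative Lipschitzness (with `W = β_{g₀}ᵀg₀(X)` a.s.) moves
each of the two losses by at most `δ`, so the exponential at `ĝ` is at most `e^{2ηδ}` times
the one at `g₀`; elsewhere it is at most `e^{ηB} ≤ e^{ηB} L‖β_ĝᵀĝ(X) − W‖ / δ`. Integrating
and using the central condition at `g₀` gives `E ≤ e^{η(ε+2δ)} + b`, and
`log (a + b) ≤ log a + b` for `a ≥ 1` finishes.
-/

namespace Real

theorem log_add_le_log_add {a b : ℝ} (ha : 1 ≤ a) (hb : 0 ≤ b) :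
    log (a + b) ≤ log a + b := by
  have ha₀ : 0 < a := one_pos.trans_le ha
  have hmul : a + b ≤ a * exp b :=
    calc a + b ≤ a * (b + 1) := by nlinarith
      _ ≤ a * exp b := mul_le_mul_of_nonneg_left (add_one_le_exp b) ha₀.le
  calc log (a + b) ≤ log (a * exp b) := log_le_log (by positivity) hmul
    _ = log a + b := by rw [log_mul ha₀.ne' (exp_pos b).ne', log_exp]

theorem exp_le_exp_mul_exp_add_mul_exp_div {t t₀ M κ c δ : ℝ} (hκ : 0 ≤ κ) (hc : 0 ≤ c)
    (hδ : 0 < δ) (ht₀ : t ≤ t₀ + κ * c) (hM : t ≤ M) :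
    exp t ≤ exp (κ * δ) * exp t₀ + c * exp M / δ := by
  rcases le_or_gt c δ with hcδ | hδc
  · have hclose : exp t ≤ exp (κ * δ) * exp t₀ := by
      rw [← exp_add]
      exact exp_le_exp.mpr (by nlinarith)
    have : 0 ≤ c * exp M / δ := by positivity
    linarith
  · have hfar : exp t ≤ c * exp M / δ := by
      rw [le_div_iff₀ hδ]
      calc exp t * δ ≤ exp M * c := by gcongr
        _ = c * exp M := mul_comm _ _
    have : 0 ≤ exp (κ * δ) * exp t₀ := by positivity
    linarith

theorem one_div_mul_log_le_of_le_exp_add {x η ε b : ℝ} (hη : 0 < η) (hε : 0 ≤ ε)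
    (hb : 0 ≤ b) (hx : 0 < x) (h : x ≤ exp (η * ε) + b) :
    1 / η * log x ≤ ε + b / η := by
  have hlog : log x ≤ η * ε + b :=
    calc log x ≤ log (exp (η * ε) + b) := log_le_log hx h
      _ ≤ log (exp (η * ε)) + b := log_add_le_log_add (one_le_exp (by positivity)) hb
      _ = η * ε + b := by rw [log_exp]
  calc 1 / η * log x ≤ 1 / η * (η * ε + b) := by gcongr
    _ = ε + b / η := by field_simp

end Real

theorem neg_mul_sub_le_mul_of_mem_Icc {η B a b : ℝ} (hη : 0 ≤ η) (ha : a ∈ Set.Icc 0 B)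
    (hb : b ∈ Set.Icc 0 B) : -η * (a - b) ≤ η * B := by
  nlinarith [ha.1, hb.2]

theorem neg_mul_sub_le_of_abs_sub_le {η c a a₀ b b₀ : ℝ} (hη : 0 ≤ η) (ha : |a - a₀| ≤ c)
    (hb : |b - b₀| ≤ c) : -η * (a - b) ≤ -η * (a₀ - b₀) + 2 * η * c := by
  nlinarith [(abs_le.mp ha).1, (abs_le.mp hb).2]

theorem weak_central_condition_transfer_continuous_split_general
    {𝓧 𝓦 𝓨 𝓩 : Type*} [MeasurableSpace 𝓧] [MeasurableSpace 𝓨]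
    [NormedAddCommGroup 𝓦] [MeasurableSpace 𝓦]
    (P : Measure (𝓧 × 𝓦 × 𝓨)) [IsProbabilityMeasure P]
    (ℓ : 𝓨 → 𝓨 → ℝ) (B : ℝ)
    (hℓ : ∀ y y', ℓ y y' ∈ Set.Icc 0 B)
    (ℓw : 𝓦 → 𝓦 → ℝ)
    (hℓw : ∀ w w', ℓw w w' = ‖w - w'‖)
    (G : Set (𝓧 → 𝓩)) (wp : (𝓧 → 𝓩) → 𝓧 → 𝓦)
    (g₀ : 𝓧 → 𝓩) (hg₀ : g₀ ∈ G)
    (hg₀W : ∀ᵐ u ∂P, wp g₀ u.1 = u.2.1)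
    (F : Set (𝓧 → 𝓩 → 𝓨)) (L : ℝ) (hL : 0 < L)
    (hLip : ∀ f ∈ F, ∀ x y, ∀ g ∈ G, ∀ g' ∈ G,
      |ℓ (f x (g x)) y - ℓ (f x (g' x)) y| ≤ L * ℓw (wp g x) (wp g' x))
    (η ε : ℝ) (hη : 0 < η) (hε : 0 ≤ ε)
    (fstar : 𝓧 → 𝓩 → 𝓨) (hfstar : fstar ∈ F)
    (hInt : ∀ f ∈ F, ∀ g ∈ G, Integrable
      (fun u => Real.exp (-η * (ℓ (f u.1 (g u.1)) u.2.2 - ℓ (fstar u.1 (g u.1)) u.2.2))) P)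
    (hcentral : ∀ f ∈ F,
      ∫ u, Real.exp (-η * (ℓ (f u.1 (g₀ u.1)) u.2.2 - ℓ (fstar u.1 (g₀ u.1)) u.2.2)) ∂P
        ≤ Real.exp (η * ε)) :
    ∀ ghat ∈ G, Integrable (fun u => ‖wp ghat u.1 - u.2.1‖) P →
      ∀ f ∈ F, ∀ δ : ℝ, 0 < δ →
      (1 / η) * Real.log (∫ u,
          Real.exp (-η * (ℓ (f u.1 (ghat u.1)) u.2.2 - ℓ (fstar u.1 (ghat u.1)) u.2.2)) ∂P)
        ≤ ε + 2 * δ +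
            (L * Real.exp (η * B) / (δ * η)) * ∫ u, ‖wp ghat u.1 - u.2.1‖ ∂P := by
  intro ghat hghat hdist f hf δ hδ
  set K := L * Real.exp (η * B) / δ
  have hpointwise : ∀ᵐ u ∂P,
      Real.exp (-η * (ℓ (f u.1 (ghat u.1)) u.2.2 - ℓ (fstar u.1 (ghat u.1)) u.2.2))
        ≤ Real.exp (2 * η * δ)
            * Real.exp (-η * (ℓ (f u.1 (g₀ u.1)) u.2.2 - ℓ (fstar u.1 (g₀ u.1)) u.2.2))
          + K * ‖wp ghat u.1 - u.2.1‖ := by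
    filter_upwards [hg₀W] with ⟨x, w, y⟩ hw
    have hmove : ∀ φ ∈ F, |ℓ (φ x (ghat x)) y - ℓ (φ x (g₀ x)) y| ≤ L * ‖wp ghat x - w‖ :=
      fun φ hφ => by simpa only [hℓw, hw] using hLip φ hφ x y ghat hghat g₀ hg₀
    have := Real.exp_le_exp_mul_exp_add_mul_exp_div (by positivity) (by positivity) hδ
      (neg_mul_sub_le_of_abs_sub_le hη.le (hmove f hf) (hmove fstar hfstar))
      (neg_mul_sub_le_mul_of_mem_Icc hη.le (hℓ _ y) (hℓ _ y))
    convert this using 2; ring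
  have hintegral := calc
    ∫ u, Real.exp (-η * (ℓ (f u.1 (ghat u.1)) u.2.2 - ℓ (fstar u.1 (ghat u.1)) u.2.2)) ∂P
      ≤ Real.exp (2 * η * δ)
            * ∫ u, Real.exp (-η * (ℓ (f u.1 (g₀ u.1)) u.2.2 - ℓ (fstar u.1 (g₀ u.1)) u.2.2)) ∂P
          + K * ∫ u, ‖wp ghat u.1 - u.2.1‖ ∂P := by
        rw [← integral_const_mul, ← integral_const_mul, ← integral_add]
        · exact integral_mono_ae (hInt f hf ghat hghat)
            (((hInt f hf g₀ hg₀).const_mul _).add (hdist.const_mul _)) hpointwise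
        · exact (hInt f hf g₀ hg₀).const_mul _
        · exact hdist.const_mul _
    _ ≤ Real.exp (η * (ε + 2 * δ)) + K * ∫ u, ‖wp ghat u.1 - u.2.1‖ ∂P := by
        rw [show η * (ε + 2 * δ) = 2 * η * δ + η * ε by ring, Real.exp_add]
        gcongr
        exact hcentral f hf
  calc _ ≤ ε + 2 * δ + K * (∫ u, ‖wp ghat u.1 - u.2.1‖ ∂P) / η :=
        Real.one_div_mul_log_le_of_le_exp_add hη (by positivity)
          (by positivity) (integral_exp_pos (hInt f hf ghat hghat)) hintegral
    _ = _ := by simp only [K]; field_simp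

/-- Transfer of the weak central condition, continuous weak labels, split form: if
`ℓʷ(w,w') = ‖w − w'‖`, `ℓ` takes values in `[0,B]`, every `f ∈ F` is `L`-Lipschitz
relative to `G`, and `(ℓ, P_{g₀}, F)` satisfies the `ε`-weak `η`-central condition with
witness `f*`, then for every `ĝ ∈ G`, `f ∈ F` and `δ > 0`,
`(1/η)·log E[exp(−η(ℓ_{f(·,ĝ)} − ℓ_{f*(·,ĝ)}))] ≤ ε + 2δ + (L·e^{ηB}/(δη))·E‖β_ĝᵀ ĝ(X) − W‖`.
Here `wp g : 𝓧 → 𝓦` denotes the weak predictor `x ↦ β_gᵀ g(x)` associated with `g ∈ G`. -/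
theorem weak_central_condition_transfer_continuous_split
    {𝓧 𝓦 𝓨 𝓩 : Type*} [MeasurableSpace 𝓧] [MeasurableSpace 𝓨]
    [NormedAddCommGroup 𝓦] [MeasurableSpace 𝓦]
    (P : Measure (𝓧 × 𝓦 × 𝓨)) [IsProbabilityMeasure P]
    (ℓ : 𝓨 → 𝓨 → ℝ) (B : ℝ) (hB : 0 < B)
    (hℓ : ∀ y y', ℓ y y' ∈ Set.Icc 0 B)
    (ℓw : 𝓦 → 𝓦 → ℝ)
    (hℓw : ∀ w w', ℓw w w' = ‖w - w'‖)
    (G : Set (𝓧 → 𝓩)) (wp : (𝓧 → 𝓩) → 𝓧 → 𝓦)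
    (g₀ : 𝓧 → 𝓩) (hg₀ : g₀ ∈ G)
    (hg₀W : ∀ᵐ u ∂P, wp g₀ u.1 = u.2.1)
    (F : Set (𝓧 → 𝓩 → 𝓨)) (L : ℝ) (hL : 0 < L)
    (hLip : ∀ f ∈ F, ∀ x y, ∀ g ∈ G, ∀ g' ∈ G,
      |ℓ (f x (g x)) y - ℓ (f x (g' x)) y| ≤ L * ℓw (wp g x) (wp g' x))
    (η ε : ℝ) (hη : 0 < η) (hε : 0 ≤ ε)
    (fstar : 𝓧 → 𝓩 → 𝓨) (hfstar : fstar ∈ F)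
    (hInt : ∀ f ∈ F, ∀ g ∈ G, Integrable
      (fun u => Real.exp (-η * (ℓ (f u.1 (g u.1)) u.2.2 - ℓ (fstar u.1 (g u.1)) u.2.2))) P)
    (hcentral : ∀ f ∈ F,
      ∫ u, Real.exp (-η * (ℓ (f u.1 (g₀ u.1)) u.2.2 - ℓ (fstar u.1 (g₀ u.1)) u.2.2)) ∂P
        ≤ Real.exp (η * ε)) :
    ∀ ghat ∈ G, Integrable (fun u => ‖wp ghat u.1 - u.2.1‖) P →
      ∀ f ∈ F, ∀ δ : ℝ, 0 < δ →
      (1 / η) * Real.log (∫ u,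
          Real.exp (-η * (ℓ (f u.1 (ghat u.1)) u.2.2 - ℓ (fstar u.1 (ghat u.1)) u.2.2)) ∂P)
        ≤ ε + 2 * δ +
            (L * Real.exp (η * B) / (δ * η)) * ∫ u, ‖wp ghat u.1 - u.2.1‖ ∂P :=
  weak_central_condition_transfer_continuous_split_general P ℓ B hℓ ℓw hℓw G wp g₀ hg₀ hg₀W F L hL
    hLip η ε hη hε fstar hfstar hInt hcentral
end

section
/- Suppose W is a normed space, ℓ^weak(w,w') = ‖w − w'‖, the loss ℓ takes values in [0,B] for some B > 0, every f ∈ F is L-Lipschitz relative to G, and (ℓ, P_{g₀}, F) satisfies the ε-weak η-central condition with witness f* ∈ F. Then for every ĝ ∈ G and every f ∈ F, (1/η)·log E_P[exp(−η(ℓ(f(X, ĝ(X)), Y) − ℓ(f*(X, ĝ(X)), Y)))] ≤ ε + 2√2 · √(L·e^{ηB}/η) · √(E_P[‖β_ĝᵀ ĝ(X) − W‖]); in particular, (ℓ, P̂, F) satisfies the (ε + 2√2·√(L·e^{ηB}/η)·√(E_P[‖β_ĝᵀ ĝ(X) − W‖]))-weak η-central condition with the same witness f*. -/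
open MeasureTheory Real

/-!
Fix `t > 0` and write `Δ = ‖β_ĝᵀ ĝ(X) − W‖`. Where `Δ ≤ t`, relative Lipschitzness (with
`W = β_{g₀}ᵀ g₀(X)`) moves the excess loss of `f` over `f*` by at most `2Lt`, so the integrand
is at most `e^{2ηLt}` times its value at `g₀`; where `Δ > t`, the bounded loss gives the bound
`e^{ηB} ≤ e^{ηB} Δ / t`. Integrating and applying the central condition at `g₀`,
`E e^{−η(…)} ≤ e^{η(ε + 2Lt)} + e^{ηB} E Δ / t ≤ exp (η(ε + 2Lt) + e^{ηB} E Δ / t)`,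
and minimising `2Lt + e^{ηB} E Δ / (ηt)` over `t` yields the square-root bound.
-/

lemma add_le_mul_exp {a b : ℝ} (ha : 1 ≤ a) (hb : 0 ≤ b) : a + b ≤ a * exp b :=
  calc a + b ≤ a * (b + 1) := by nlinarith
    _ ≤ a * exp b := by gcongr; exact add_one_le_exp b

lemma le_add_two_sqrt_mul_of_forall_le {x c a b : ℝ} (ha : 0 < a) (hb : 0 ≤ b)
    (h : ∀ t > 0, x ≤ c + a * t + b / t) : x ≤ c + 2 * √(a * b) := by
  rcases hb.eq_or_lt with rfl | hb
  · refine le_of_forall_pos_le_add fun δ hδ => ?_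
    simpa [mul_div_cancel₀ δ ha.ne'] using h (δ / a) (by positivity)
  · have hsa := sq_sqrt ha.le
    have hsb := sq_sqrt hb.le
    have : 0 < √a := sqrt_pos.2 ha
    have : 0 < √b := sqrt_pos.2 hb
    calc x ≤ c + a * (√b / √a) + b / (√b / √a) := h _ (by positivity)
      _ = c + 2 * √(a * b) := by
        rw [sqrt_mul ha.le]; field_simp
        linear_combination (b - 2 * √b ^ 2) * hsa - a * hsb

lemma exp_neg_mul_le_of_abs_sub_le {η B L t D D₀ Δ : ℝ} (hη : 0 ≤ η) (hL : 0 ≤ L) (ht : 0 < t)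
    (hΔ : 0 ≤ Δ) (hD : -B ≤ D) (hDD₀ : |D - D₀| ≤ 2 * L * Δ) :
    exp (-η * D) ≤ exp (2 * η * L * t) * exp (-η * D₀) + exp (η * B) / t * Δ := by
  rcases le_or_gt Δ t with hΔt | hΔt
  · have hlip : η * (D₀ - D) ≤ η * (2 * L * Δ) :=
      mul_le_mul_of_nonneg_left (by linarith [(abs_le.1 hDD₀).1]) hη
    have hΔt' : η * (2 * L * Δ) ≤ η * (2 * L * t) := by gcongr
    calc exp (-η * D) ≤ exp (2 * η * L * t) * exp (-η * D₀) := by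
          rw [← exp_add]; exact exp_le_exp.2 (by linarith)
      _ ≤ _ := le_add_of_nonneg_right (by positivity)
  · calc exp (-η * D) ≤ exp (η * B) := exp_le_exp.2 (by nlinarith)
      _ ≤ exp (η * B) / t * Δ := by
          rw [div_mul_eq_mul_div, le_div_iff₀ ht]; gcongr
      _ ≤ _ := le_add_of_nonneg_left (by positivity)

section

variable {Ω : Type*} [MeasurableSpace Ω] {μ : Measure Ω} {D D₀ Δ : Ω → ℝ} {η ε B L : ℝ}

lemma integral_exp_neg_mul_le_of_abs_sub_le (hη : 0 ≤ η) (hL : 0 ≤ L) {t : ℝ} (ht : 0 < t)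
    (hΔ : ∀ ω, 0 ≤ Δ ω) (hD : ∀ ω, -B ≤ D ω) (hDD₀ : ∀ᵐ ω ∂μ, |D ω - D₀ ω| ≤ 2 * L * Δ ω)
    (hint : Integrable (fun ω ↦ exp (-η * D ω)) μ)
    (hint₀ : Integrable (fun ω ↦ exp (-η * D₀ ω)) μ) (hintΔ : Integrable Δ μ) :
    ∫ ω, exp (-η * D ω) ∂μ ≤
      exp (2 * η * L * t) * ∫ ω, exp (-η * D₀ ω) ∂μ + exp (η * B) / t * ∫ ω, Δ ω ∂μ := by
  rw [← integral_const_mul, ← integral_const_mul,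
    ← integral_add (hint₀.const_mul _) (hintΔ.const_mul _)]
  refine integral_mono_ae hint ((hint₀.const_mul _).add (hintΔ.const_mul _)) ?_
  filter_upwards [hDD₀] with ω hω
  exact exp_neg_mul_le_of_abs_sub_le hη hL ht (hΔ ω) (hD ω) hω

lemma inv_mul_log_integral_exp_le_of_abs_sub_le [IsProbabilityMeasure μ] (hη : 0 < η)
    (hε : 0 ≤ ε) (hL : 0 < L) (hΔ : ∀ ω, 0 ≤ Δ ω) (hD : ∀ ω, -B ≤ D ω)
    (hDD₀ : ∀ᵐ ω ∂μ, |D ω - D₀ ω| ≤ 2 * L * Δ ω)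
    (hint : Integrable (fun ω ↦ exp (-η * D ω)) μ)
    (hint₀ : Integrable (fun ω ↦ exp (-η * D₀ ω)) μ) (hintΔ : Integrable Δ μ)
    (hcentral : ∫ ω, exp (-η * D₀ ω) ∂μ ≤ exp (η * ε)) :
    1 / η * log (∫ ω, exp (-η * D ω) ∂μ) ≤
      ε + 2 * √2 * √(L * exp (η * B) / η) * √(∫ ω, Δ ω ∂μ) := by
  set m := ∫ ω, Δ ω ∂μ
  have hm : 0 ≤ m := integral_nonneg hΔ
  have hI : 0 < ∫ ω, exp (-η * D ω) ∂μ := integral_exp_pos hint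
  have hlog_le : ∀ t > 0, 1 / η * log (∫ ω, exp (-η * D ω) ∂μ) ≤
      ε + 2 * L * t + exp (η * B) / η * m / t := by
    intro t ht
    have hIle : ∫ ω, exp (-η * D ω) ∂μ ≤ exp (η * ε + 2 * η * L * t + exp (η * B) / t * m) :=
      calc ∫ ω, exp (-η * D ω) ∂μ
          ≤ exp (2 * η * L * t) * ∫ ω, exp (-η * D₀ ω) ∂μ + exp (η * B) / t * m :=
            integral_exp_neg_mul_le_of_abs_sub_le hη.le hL.le ht hΔ hD hDD₀ hint hint₀ hintΔ
        _ ≤ exp (2 * η * L * t) * exp (η * ε) + exp (η * B) / t * m := by gcongr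
        _ ≤ exp (2 * η * L * t) * exp (η * ε) * exp (exp (η * B) / t * m) :=
            add_le_mul_exp (by rw [← exp_add]; exact one_le_exp (by positivity)) (by positivity)
        _ = _ := by rw [← exp_add, ← exp_add]; ring_nf
    rw [one_div, inv_mul_le_iff₀ hη]
    calc log (∫ ω, exp (-η * D ω) ∂μ) ≤ η * ε + 2 * η * L * t + exp (η * B) / t * m :=
          (log_le_iff_le_exp hI).2 hIle
      _ = η * (ε + 2 * L * t + exp (η * B) / η * m / t) := by field_simp
  calc 1 / η * log (∫ ω, exp (-η * D ω) ∂μ)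
      ≤ ε + 2 * √(2 * L * (exp (η * B) / η * m)) :=
        le_add_two_sqrt_mul_of_forall_le (by positivity) (by positivity) hlog_le
    _ = ε + 2 * √2 * √(L * exp (η * B) / η) * √m := by
        rw [show 2 * L * (exp (η * B) / η * m) = 2 * (L * exp (η * B) / η) * m by ring,
          sqrt_mul (by positivity), sqrt_mul zero_le_two]
        ring

end

-- `wp g` encodes the weak predictor `x ↦ β_gᵀ g(x)`.
theorem weak_central_condition_transfer_continuous_general
    {𝓧 𝓦 𝓨 𝓩 : Type*} [MeasurableSpace 𝓧] [MeasurableSpace 𝓨]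
    [NormedAddCommGroup 𝓦] [MeasurableSpace 𝓦]
    (P : Measure (𝓧 × 𝓦 × 𝓨)) [IsProbabilityMeasure P]
    (ℓ : 𝓨 → 𝓨 → ℝ) (B : ℝ)
    (hℓ : ∀ y y', ℓ y y' ∈ Set.Icc 0 B)
    (ℓw : 𝓦 → 𝓦 → ℝ)
    (hℓw : ∀ w w', ℓw w w' = ‖w - w'‖)
    (G : Set (𝓧 → 𝓩)) (wp : (𝓧 → 𝓩) → 𝓧 → 𝓦)
    (g₀ : 𝓧 → 𝓩) (hg₀ : g₀ ∈ G)
    (hg₀W : ∀ᵐ u ∂P, wp g₀ u.1 = u.2.1)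
    (F : Set (𝓧 → 𝓩 → 𝓨)) (L : ℝ) (hL : 0 < L)
    (hLip : ∀ f ∈ F, ∀ x y, ∀ g ∈ G, ∀ g' ∈ G,
      |ℓ (f x (g x)) y - ℓ (f x (g' x)) y| ≤ L * ℓw (wp g x) (wp g' x))
    (η ε : ℝ) (hη : 0 < η) (hε : 0 ≤ ε)
    (fstar : 𝓧 → 𝓩 → 𝓨) (hfstar : fstar ∈ F)
    (hInt : ∀ f ∈ F, ∀ g ∈ G, Integrable
      (fun u => Real.exp (-η * (ℓ (f u.1 (g u.1)) u.2.2 - ℓ (fstar u.1 (g u.1)) u.2.2))) P)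
    (hcentral : ∀ f ∈ F,
      ∫ u, Real.exp (-η * (ℓ (f u.1 (g₀ u.1)) u.2.2 - ℓ (fstar u.1 (g₀ u.1)) u.2.2)) ∂P
        ≤ Real.exp (η * ε)) :
    ∀ ghat ∈ G, Integrable (fun u => ‖wp ghat u.1 - u.2.1‖) P →
      ∀ f ∈ F,
      (1 / η) * Real.log (∫ u,
          Real.exp (-η * (ℓ (f u.1 (ghat u.1)) u.2.2 - ℓ (fstar u.1 (ghat u.1)) u.2.2)) ∂P)
        ≤ ε + 2 * Real.sqrt 2 * Real.sqrt (L * Real.exp (η * B) / η) *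
            Real.sqrt (∫ u, ‖wp ghat u.1 - u.2.1‖ ∂P) := by
  intro ghat hghat hintΔ f hf
  have hDD₀ : ∀ᵐ u ∂P,
      |(ℓ (f u.1 (ghat u.1)) u.2.2 - ℓ (fstar u.1 (ghat u.1)) u.2.2) -
        (ℓ (f u.1 (g₀ u.1)) u.2.2 - ℓ (fstar u.1 (g₀ u.1)) u.2.2)| ≤
        2 * L * ‖wp ghat u.1 - u.2.1‖ := by
    filter_upwards [hg₀W] with u hu
    have hf' := hLip f hf u.1 u.2.2 ghat hghat g₀ hg₀
    have hfstar' := hLip fstar hfstar u.1 u.2.2 ghat hghat g₀ hg₀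
    rw [hℓw, hu] at hf' hfstar'
    rw [abs_le] at hf' hfstar' ⊢
    constructor <;> linarith
  refine inv_mul_log_integral_exp_le_of_abs_sub_le hη hε hL (fun _ ↦ norm_nonneg _)
    (fun u ↦ ?_) hDD₀ (hInt f hf ghat hghat) (hInt f hf g₀ hg₀) hintΔ (hcentral f hf)
  linarith [(hℓ (f u.1 (ghat u.1)) u.2.2).1, (hℓ (fstar u.1 (ghat u.1)) u.2.2).2]

/-- Transfer of the weak central condition, continuous weak labels, optimized form (Proposition 3
of the paper): if `ℓʷ(w,w') = ‖w − w'‖`, `ℓ` takes values in `[0,B]`, every `f ∈ F` is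
`L`-Lipschitz relative to `G`, and `(ℓ, P_{g₀}, F)` satisfies the `ε`-weak `η`-central
condition with witness `f*`, then for every `ĝ ∈ G` and `f ∈ F`,
`(1/η)·log E[exp(−η(ℓ_{f(·,ĝ)} − ℓ_{f*(·,ĝ)}))]
  ≤ ε + 2√2·√(L·e^{ηB}/η)·√(E‖β_ĝᵀ ĝ(X) − W‖)`;
i.e. `(ℓ, P̂, F)` satisfies the corresponding weak `η`-central condition with witness `f*`.
Here `wp g : 𝓧 → 𝓦` denotes the weak predictor `x ↦ β_gᵀ g(x)` associated with `g ∈ G`. -/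
theorem weak_central_condition_transfer_continuous
    {𝓧 𝓦 𝓨 𝓩 : Type*} [MeasurableSpace 𝓧] [MeasurableSpace 𝓨]
    [NormedAddCommGroup 𝓦] [MeasurableSpace 𝓦]
    (P : Measure (𝓧 × 𝓦 × 𝓨)) [IsProbabilityMeasure P]
    (ℓ : 𝓨 → 𝓨 → ℝ) (B : ℝ) (hB : 0 < B)
    (hℓ : ∀ y y', ℓ y y' ∈ Set.Icc 0 B)
    (ℓw : 𝓦 → 𝓦 → ℝ)
    (hℓw : ∀ w w', ℓw w w' = ‖w - w'‖)
    (G : Set (𝓧 → 𝓩)) (wp : (𝓧 → 𝓩) → 𝓧 → 𝓦)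
    (g₀ : 𝓧 → 𝓩) (hg₀ : g₀ ∈ G)
    (hg₀W : ∀ᵐ u ∂P, wp g₀ u.1 = u.2.1)
    (F : Set (𝓧 → 𝓩 → 𝓨)) (L : ℝ) (hL : 0 < L)
    (hLip : ∀ f ∈ F, ∀ x y, ∀ g ∈ G, ∀ g' ∈ G,
      |ℓ (f x (g x)) y - ℓ (f x (g' x)) y| ≤ L * ℓw (wp g x) (wp g' x))
    (η ε : ℝ) (hη : 0 < η) (hε : 0 ≤ ε)
    (fstar : 𝓧 → 𝓩 → 𝓨) (hfstar : fstar ∈ F)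
    (hInt : ∀ f ∈ F, ∀ g ∈ G, Integrable
      (fun u => Real.exp (-η * (ℓ (f u.1 (g u.1)) u.2.2 - ℓ (fstar u.1 (g u.1)) u.2.2))) P)
    (hcentral : ∀ f ∈ F,
      ∫ u, Real.exp (-η * (ℓ (f u.1 (g₀ u.1)) u.2.2 - ℓ (fstar u.1 (g₀ u.1)) u.2.2)) ∂P
        ≤ Real.exp (η * ε)) :
    ∀ ghat ∈ G, Integrable (fun u => ‖wp ghat u.1 - u.2.1‖) P →
      ∀ f ∈ F,
      (1 / η) * Real.log (∫ u,
          Real.exp (-η * (ℓ (f u.1 (ghat u.1)) u.2.2 - ℓ (fstar u.1 (ghat u.1)) u.2.2)) ∂P)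
        ≤ ε + 2 * Real.sqrt 2 * Real.sqrt (L * Real.exp (η * B) / η) *
            Real.sqrt (∫ u, ‖wp ghat u.1 - u.2.1‖ ∂P) :=
  weak_central_condition_transfer_continuous_general P ℓ B hℓ ℓw hℓw G wp g₀ hg₀ hg₀W F L hL hLip η
    ε hη hε fstar hfstar hInt hcentral
end

section
/- Let (Ω, P) be an atomless probability space, let η > 0, and let Δ : Ω → ℝ be a measurable random variable that is almost surely bounded (|Δ| ≤ V almost surely for some V > 0) and satisfies E[e^{−ηΔ}] ≤ 1. Then for every ε > 0 there exist η' with η ≤ η' ≤ 2η and a measurable random variable Δ̃ : Ω → ℝ such that: (1) Δ̃ ≤ Δ almost surely; (2) E[e^{−η'Δ̃}] = 1; and (3) |E[Δ − Δ̃]| ≤ ε. -/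
/-! Lower `Δ` by a constant `c ≥ 0` on a set `A` of small probability `p`. The exponential moment
of the modified variable is `e^{ηc} ∫_A e^{-ηΔ} + ∫_{Aᶜ} e^{-ηΔ}`, which is `≤ 1` at `c = 0` and
can be solved for `= 1` explicitly. Since `∫_A e^{-ηΔ} ≥ p e^{-ηV}`, the solution satisfies
`c ≤ V + log (1/p) / η`, so the cost `E[Δ - Δ'] = c p ≤ p (V + log (1/p) / η)` tends to `0`
with `p`; atomlessness provides `A` with the required `p`. -/

open MeasureTheory Real

lemma exists_pos_exp_neg_mul_add_mul_le (a b : ℝ) {ε : ℝ} (hε : 0 < ε) :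
    ∃ t, 0 < t ∧ exp (-t) * (a + b * t) ≤ ε := by
  have hlim : Filter.Tendsto (fun t => exp (-t) * (a + b * t)) Filter.atTop (nhds 0) := by
    have ha := tendsto_exp_neg_atTop_nhds_zero.const_mul a
    have hb := (tendsto_pow_mul_exp_neg_atTop_nhds_zero 1).const_mul b
    rw [mul_zero] at ha hb
    simpa only [add_zero] using (ha.add hb).congr fun t => by ring
  obtain ⟨t, htε, ht⟩ :=
    ((hlim.eventually (eventually_le_nhds hε)).and (Filter.eventually_gt_atTop 0)).exists
  exact ⟨t, ht, htε⟩

lemma exists_nonneg_exp_mul_mul_add_eq_one {η a b : ℝ} (hη : 0 < η) (ha : 0 < a) (hb : 0 ≤ b)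
    (hab : a + b ≤ 1) : ∃ c, 0 ≤ c ∧ η * c ≤ -log a ∧ exp (η * c) * a + b = 1 := by
  have hratio : 1 ≤ (1 - b) / a := by rw [le_div_iff₀ ha]; linarith
  have hηc : η * (log ((1 - b) / a) / η) = log ((1 - b) / a) := by field_simp
  refine ⟨log ((1 - b) / a) / η, div_nonneg (log_nonneg hratio) hη.le, ?_, ?_⟩
  · rw [hηc, ← log_inv, ← one_div]
    exact log_le_log (by linarith) (by gcongr; linarith)
  · rw [hηc, exp_log (by linarith), div_mul_cancel₀ _ ha.ne']
    ring

section Modification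

variable {Ω : Type*} [MeasurableSpace Ω] {μ : Measure Ω} {η : ℝ} {Δ : Ω → ℝ} {A : Set Ω}

lemma integral_exp_neg_mul_sub_indicator (hA : MeasurableSet A)
    (hint : Integrable (fun ω => exp (-η * Δ ω)) μ) (c : ℝ) :
    ∫ ω, exp (-η * (Δ ω - A.indicator (fun _ => c) ω)) ∂μ =
      exp (η * c) * ∫ ω in A, exp (-η * Δ ω) ∂μ + ∫ ω in Aᶜ, exp (-η * Δ ω) ∂μ := by
  classical
  have hpiece : (fun ω => exp (-η * (Δ ω - A.indicator (fun _ => c) ω))) =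
      A.piecewise (fun ω => exp (η * c) * exp (-η * Δ ω)) (fun ω => exp (-η * Δ ω)) := by
    funext ω
    by_cases hω : ω ∈ A
    · simp only [Set.piecewise_eq_of_mem _ _ _ hω, Set.indicator_of_mem hω, ← exp_add]
      ring_nf
    · simp [Set.piecewise_eq_of_notMem _ _ _ hω, Set.indicator_of_notMem hω]
  rw [hpiece, integral_piecewise hA (hint.const_mul _).integrableOn hint.integrableOn,
    integral_const_mul]

lemma exists_indicator_modification [IsFiniteMeasure μ] (hA : MeasurableSet A)
    (hμA : 0 < μ.real A) (hη : 0 < η) (hΔ : AEMeasurable Δ μ) {V : ℝ}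
    (hbdd : ∀ᵐ ω ∂μ, |Δ ω| ≤ V) (hexp : ∫ ω, exp (-η * Δ ω) ∂μ ≤ 1) :
    ∃ c, 0 ≤ c ∧ η * c ≤ η * V - log (μ.real A) ∧
      ∫ ω, exp (-η * (Δ ω - A.indicator (fun _ => c) ω)) ∂μ = 1 := by
  have hint : Integrable (fun ω => exp (-η * Δ ω)) μ :=
    ProbabilityTheory.integrable_exp_mul_of_mem_Icc hΔ (hbdd.mono fun _ h => abs_le.1 h)
  have hlower : μ.real A * exp (-η * V) ≤ ∫ ω in A, exp (-η * Δ ω) ∂μ := by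
    rw [← smul_eq_mul, ← setIntegral_const]
    refine setIntegral_mono_ae (integrableOn_const (measure_ne_top μ A)) hint.integrableOn ?_
    filter_upwards [hbdd] with ω hω
    exact exp_le_exp.2 (mul_le_mul_of_nonpos_left (abs_le.1 hω).2 (by linarith))
  have hpos : 0 < ∫ ω in A, exp (-η * Δ ω) ∂μ := lt_of_lt_of_le (by positivity) hlower
  have hsplit := integral_add_compl hA hint
  obtain ⟨c, hc0, hcle, hc1⟩ := exists_nonneg_exp_mul_mul_add_eq_one hη hpos
    (setIntegral_nonneg hA.compl fun ω _ => (exp_pos _).le) (hsplit ▸ hexp)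
  refine ⟨c, hc0, ?_, by rw [integral_exp_neg_mul_sub_indicator hA hint, hc1]⟩
  calc η * c ≤ -log (∫ ω in A, exp (-η * Δ ω) ∂μ) := hcle
    _ ≤ -log (μ.real A * exp (-η * V)) := by gcongr
    _ = η * V - log (μ.real A) := by rw [log_mul hμA.ne' (exp_pos _).ne', log_exp]; ring

end Modification

theorem modification_lemma_general {Ω : Type*} [MeasurableSpace Ω]
    (P : Measure Ω) [IsProbabilityMeasure P]
    (hAtomless : ∀ p : ℝ, 0 < p → p < 1 →
      ∃ A : Set Ω, MeasurableSet A ∧ P A = ENNReal.ofReal p)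
    (η : ℝ) (hη : 0 < η)
    (Δ : Ω → ℝ) (hΔmeas : Measurable Δ)
    (V : ℝ) (hbdd : ∀ᵐ ω ∂P, |Δ ω| ≤ V)
    (hexp : ∫ ω, Real.exp (-η * Δ ω) ∂P ≤ 1)
    (ε : ℝ) (hε : 0 < ε) :
    ∃ (η' : ℝ) (Δ' : Ω → ℝ), η ≤ η' ∧ η' ≤ 2 * η ∧ Measurable Δ' ∧
      (∀ᵐ ω ∂P, Δ' ω ≤ Δ ω) ∧
      (∫ ω, Real.exp (-η' * Δ' ω) ∂P = 1) ∧
      |∫ ω, (Δ ω - Δ' ω) ∂P| ≤ ε := by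
  obtain ⟨t, ht, htε⟩ := exists_pos_exp_neg_mul_add_mul_le V η⁻¹ hε
  obtain ⟨A, hA, hPA⟩ := hAtomless (exp (-t)) (exp_pos _) (exp_lt_one_iff.2 (by linarith))
  have hPA' : P.real A = exp (-t) := by
    rw [measureReal_def, hPA, ENNReal.toReal_ofReal (exp_pos _).le]
  obtain ⟨c, hc0, hcle, hc1⟩ := exists_indicator_modification hA (hPA' ▸ exp_pos _) hη
    hΔmeas.aemeasurable hbdd hexp
  have hcV : c ≤ V + η⁻¹ * t := by
    refine le_of_mul_le_mul_left ?_ hη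
    rw [mul_add, mul_inv_cancel_left₀ hη.ne']
    linarith [hPA' ▸ log_exp (-t)]
  refine ⟨η, fun ω => Δ ω - A.indicator (fun _ => c) ω, le_rfl, by linarith,
    hΔmeas.sub (measurable_const.indicator hA),
    ae_of_all _ fun ω => sub_le_self _ (Set.indicator_nonneg (fun _ _ => hc0) ω), hc1, ?_⟩
  simp only [sub_sub_cancel]
  rw [integral_indicator_const _ hA, hPA', smul_eq_mul, abs_of_nonneg (by positivity)]
  calc exp (-t) * c ≤ exp (-t) * (V + η⁻¹ * t) := by gcongr
    _ ≤ ε := htε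

/-- Modification lemma: on an atomless probability space, a bounded random variable `Δ` with
`E[exp (-η Δ)] ≤ 1` admits, for every `ε > 0`, a modification `Δ'` with `Δ' ≤ Δ` a.s.,
`E[exp (-η' Δ')] = 1` for some `η ≤ η' ≤ 2η`, and `|E[Δ - Δ']| ≤ ε`. -/
theorem modification_lemma {Ω : Type*} [MeasurableSpace Ω]
    (P : Measure Ω) [IsProbabilityMeasure P]
    (hAtomless : ∀ p : ℝ, 0 < p → p < 1 →
      ∃ A : Set Ω, MeasurableSet A ∧ P A = ENNReal.ofReal p)
    (η : ℝ) (hη : 0 < η)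
    (Δ : Ω → ℝ) (hΔmeas : Measurable Δ)
    (V : ℝ) (hV : 0 < V) (hbdd : ∀ᵐ ω ∂P, |Δ ω| ≤ V)
    (hexp : ∫ ω, Real.exp (-η * Δ ω) ∂P ≤ 1)
    (ε : ℝ) (hε : 0 < ε) :
    ∃ (η' : ℝ) (Δ' : Ω → ℝ), η ≤ η' ∧ η' ≤ 2 * η ∧ Measurable Δ' ∧
      (∀ᵐ ω ∂P, Δ' ω ≤ Δ ω) ∧
      (∫ ω, Real.exp (-η' * Δ' ω) ∂P = 1) ∧
      |∫ ω, (Δ ω - Δ' ω) ∂P| ≤ ε :=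
  modification_lemma_general P hAtomless η hη Δ hΔmeas V hbdd hexp ε hε
end
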